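/- Let P = Σ_{j=0}^d a_j x^j be a real polynomial of degree d all of whose coefficients a_0, …, a_d are nonzero. Let p be the number of indices j with 1 ≤ j ≤ d and a_j·a_{j−1} > 0 (sign preservations), and let neg be the number of negative real roots of P counted with multiplicity. Then neg ≤ p and p − neg is an even integer. -/

import Mathlib

/-!
Substituting `x ↦ -x` turns negative roots into positive roots and sign preservations into sign
changes, so the bound is Descartes' rule for positive roots (`roots_countP_pos_le_signVariations`)
applied to `P.comp (-X)`. For the parity, both the number of positive roots and the number of sign
changes of a polynomial `Q` with `Q 0 ≠ 0` are even exactly when `Q 0` and the leading coefficient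
have the same sign. For the sign changes: erasing the leading coefficient removes one sign change
exactly when it has the opposite sign of the next nonzero coefficient. For the roots, splitting
off a factor `X - η` with `η > 0` flips the sign of the constant term, and a polynomial without
positive roots has the sign of `Q 0` near `+∞` by the intermediate value theorem.
-/

open Polynomial Finset Filter

theorem sign_eq_neg_sign_iff_mul_neg {R : Type*} [Ring R] [LinearOrder R] [IsStrictOrderedRing R]
    {a b : R} (ha : a ≠ 0) (hb : b ≠ 0) :
    SignType.sign a = -SignType.sign b ↔ a * b < 0 := by
  rcases ha.lt_or_gt with ha | ha <;> rcases hb.lt_or_gt with hb | hb <;>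
    simp [sign_pos, sign_neg, ha, hb, mul_neg_of_neg_of_pos, mul_neg_of_pos_of_neg,
      (mul_pos_of_neg_of_neg _ _).le, (mul_pos _ _).le]

namespace Polynomial

theorem coeff_comp_neg_X {R : Type*} [Ring R] (P : R[X]) (j : ℕ) :
    (P.comp (-X)).coeff j = P.coeff j * (-1) ^ j := by
  rw [show (-X : R[X]) = C (-1) * X by simp, comp_C_mul_X_coeff]

theorem signVariations_eq_card_filter_mul_neg {R : Type*} [Ring R] [LinearOrder R]
    [IsStrictOrderedRing R] {Q : R[X]} (hQ : ∀ j ≤ Q.natDegree, Q.coeff j ≠ 0) :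
    Q.signVariations = #{j ∈ Icc 1 Q.natDegree | Q.coeff j * Q.coeff (j - 1) < 0} := by
  induction h : Q.natDegree generalizing Q with
  | zero =>
    rw [eq_C_of_natDegree_eq_zero h, ← monomial_zero_left, signVariations_monomial]
    rfl
  | succ n ih =>
    rw [h] at hQ
    have hnext : Q.nextCoeff ≠ 0 := by
      rw [nextCoeff_of_natDegree_pos (by omega), h]
      exact hQ n (by omega)
    have hdeg : Q.eraseLead.natDegree = n := by rw [natDegree_eraseLead hnext, h]; rfl
    have hcoeff : ∀ j ≤ n, Q.eraseLead.coeff j = Q.coeff j := fun j hj =>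
      eraseLead_coeff_of_ne j (by omega)
    have hL : Q.eraseLead.signVariations =
        #{j ∈ Icc 1 n | Q.coeff j * Q.coeff (j - 1) < 0} := by
      rw [ih (fun j hj => hcoeff j (hdeg ▸ hj) ▸ hQ j (by omega)) hdeg]
      refine congrArg card (filter_congr fun j hj => ?_)
      rw [mem_Icc] at hj
      rw [hcoeff j hj.2, hcoeff (j - 1) (by omega)]
    rw [signVariations_eq_eraseLead_add_ite (by rintro rfl; simp at h), hL,
      leadingCoeff_eraseLead_eq_nextCoeff hnext, nextCoeff_of_natDegree_pos (by omega),
      leadingCoeff, h, Nat.add_sub_cancel, ← insert_Icc_right_eq_Icc_add_one (by omega),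
      filter_insert]
    simp only [sign_eq_neg_sign_iff_mul_neg (hQ _ le_rfl) (hQ n (by omega)), Nat.add_sub_cancel]
    split_ifs
    · rw [card_insert_of_notMem (by simp)]
    · rfl

section CommRing

variable {R : Type*} [CommRing R] [LinearOrder R] [IsStrictOrderedRing R]

theorem even_signVariations_iff {Q : R[X]} (h0 : Q.coeff 0 ≠ 0) :
    Even Q.signVariations ↔ 0 < Q.coeff 0 * Q.leadingCoeff := by
  induction h : Q.natDegree using Nat.strong_induction_on generalizing Q with
  | _ n ih =>
  rcases Nat.eq_zero_or_pos n with rfl | hn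
  · rw [eq_C_of_natDegree_eq_zero h, ← monomial_zero_left, signVariations_monomial]
    simpa [leadingCoeff, h] using mul_self_pos.2 h0
  have hQ : Q ≠ 0 := by rintro rfl; simp at h0
  have hlt : Q.eraseLead.natDegree < n := h ▸ eraseLead_natDegree_lt (by
    rw [Nat.succ_le_iff, one_lt_card]
    exact ⟨0, by simpa using h0, Q.natDegree, by simpa using hQ, by omega⟩)
  have h0' : Q.eraseLead.coeff 0 = Q.coeff 0 := eraseLead_coeff_of_ne 0 (by omega)
  have hL : Q.eraseLead ≠ 0 := by rintro h'; simp [h'] at h0'; exact h0 h0'.symm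
  have ih' := ih _ hlt (h0' ▸ h0) rfl
  rw [h0'] at ih'
  have hlc := leadingCoeff_ne_zero.2 hQ
  have hlcL := leadingCoeff_ne_zero.2 hL
  have hprod : Q.coeff 0 * Q.leadingCoeff * (Q.coeff 0 * Q.eraseLead.leadingCoeff) =
      (Q.coeff 0 * Q.coeff 0) * (Q.leadingCoeff * Q.eraseLead.leadingCoeff) := by ring
  rw [signVariations_eq_eraseLead_add_ite hQ]
  simp only [sign_eq_neg_sign_iff_mul_neg hlc hlcL]
  split_ifs with hs
  · rw [Nat.even_add_one, ih', not_lt, (mul_ne_zero h0 hlcL).le_iff_lt]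
    exact (pos_iff_neg_of_mul_neg (hprod ▸ mul_neg_of_pos_of_neg (mul_self_pos.2 h0) hs)).symm
  · rw [add_zero, ih']
    refine pos_iff_pos_of_mul_pos (mul_comm (Q.coeff 0 * Q.leadingCoeff) _ ▸ hprod ▸ ?_)
    exact mul_pos (mul_self_pos.2 h0) ((mul_ne_zero hlc hlcL).lt_of_le' (not_lt.1 hs))

theorem roots_comp_neg_X_countP_pos (P : R[X]) :
    (P.comp (-X)).roots.countP (0 < ·) = (P.roots.filter (· < 0)).card := by
  simp only [roots_comp_neg_X, Multiset.countP_map, Left.neg_pos_iff]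

theorem signVariations_comp_neg_X {P : R[X]} (hP : ∀ j ≤ P.natDegree, P.coeff j ≠ 0) :
    (P.comp (-X)).signVariations =
      #{j ∈ Icc 1 P.natDegree | 0 < P.coeff j * P.coeff (j - 1)} := by
  have hdeg : (P.comp (-X)).natDegree = P.natDegree := by simp [natDegree_comp]
  rw [signVariations_eq_card_filter_mul_neg
    (hdeg ▸ fun j hj => by simpa [coeff_comp_neg_X] using hP j hj), hdeg]
  refine congrArg card (filter_congr fun j hj => ?_)
  obtain ⟨i, rfl⟩ : ∃ i, j = i + 1 := ⟨j - 1, by rw [mem_Icc] at hj; omega⟩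
  have hodd : (-1 : R) ^ (i + 1) * (-1) ^ i = -1 := by
    rw [← pow_add]; exact Odd.neg_one_pow ⟨i, by ring⟩
  have hflip : P.coeff (i + 1) * (-1) ^ (i + 1) * (P.coeff i * (-1) ^ i) =
      -(P.coeff (i + 1) * P.coeff i) := by
    linear_combination (P.coeff (i + 1) * P.coeff i) * hodd
  rw [coeff_comp_neg_X, coeff_comp_neg_X, Nat.add_sub_cancel, hflip, neg_lt_zero]

end CommRing

theorem coeff_zero_mul_leadingCoeff_pos_of_not_isRoot {Q : ℝ[X]} (h0 : Q.coeff 0 ≠ 0)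
    (hroot : ∀ x, 0 < x → ¬Q.IsRoot x) : 0 < Q.coeff 0 * Q.leadingCoeff := by
  by_contra! hle
  rcases le_or_gt Q.degree 0 with hdeg | hdeg
  · rw [eq_C_of_degree_le_zero hdeg] at hle
    simp only [coeff_C_zero, leadingCoeff_C] at hle
    exact (mul_self_pos.2 h0).not_ge hle
  -- `S` is positive at `0` and tends to `-∞`, so it vanishes somewhere on `(0, ∞)`.
  set S := C (Q.coeff 0) * Q
  have hS : Tendsto (fun x => S.eval x) atTop atBot :=
    tendsto_atBot_of_leadingCoeff_nonpos S (by rwa [degree_C_mul h0])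
      (by rwa [leadingCoeff_mul, leadingCoeff_C])
  obtain ⟨x, hxneg, hxpos⟩ := ((hS.eventually_lt_atBot 0).and (eventually_gt_atTop 0)).exists
  have hS0 : 0 < S.eval 0 := by simpa [S, coeff_zero_eq_eval_zero] using mul_self_pos.2 h0
  obtain ⟨y, hy, hSy⟩ := intermediate_value_Ioo' hxpos.le S.continuousOn ⟨hxneg, hS0⟩
  refine hroot y hy.1 ?_
  simpa [S, h0] using hSy

theorem even_roots_countP_pos_iff {Q : ℝ[X]} (h0 : Q.coeff 0 ≠ 0) :
    Even (Q.roots.countP (0 < ·)) ↔ 0 < Q.coeff 0 * Q.leadingCoeff := by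
  have hQ : Q ≠ 0 := by rintro rfl; simp at h0
  induction h : Q.roots.countP (0 < ·) generalizing Q with
  | zero =>
    refine iff_of_true .zero (coeff_zero_mul_leadingCoeff_pos_of_not_isRoot h0 fun x hx hx' => ?_)
    exact Multiset.countP_eq_zero.1 h x ((mem_roots hQ).2 hx') hx
  | succ n ih =>
    obtain ⟨η, hη, hηpos⟩ : ∃ x ∈ Q.roots, 0 < x :=
      Multiset.countP_pos.1 (h ▸ n.succ_pos)
    obtain ⟨Q₁, rfl⟩ := dvd_iff_isRoot.mpr (isRoot_of_mem_roots hη)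
    have hQ₁ : Q₁ ≠ 0 := right_ne_zero_of_mul hQ
    have hc0 : ((X - C η) * Q₁).coeff 0 = -η * Q₁.coeff 0 := by simp [mul_coeff_zero]
    have h0₁ : Q₁.coeff 0 ≠ 0 := by rintro h'; simp [hc0, h'] at h0
    have hcount : Q₁.roots.countP (0 < ·) = n := by
      simpa [roots_mul hQ, hηpos] using h
    rw [hc0, leadingCoeff_mul, leadingCoeff_X_sub_C, one_mul, Nat.even_add_one]
    refine (not_congr (ih h0₁ hQ₁ hcount)).trans ?_
    rw [not_lt, (mul_ne_zero h0₁ (leadingCoeff_ne_zero.2 hQ₁)).le_iff_lt, mul_assoc, neg_mul,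
      ← mul_neg, mul_pos_iff_of_pos_left hηpos, neg_pos]

end Polynomial

/-- Descartes' rule of signs for negative roots: for a real polynomial of degree `d`
with all coefficients nonzero, the number `neg` of negative roots counted with
multiplicity satisfies `neg ≤ p` and `p - neg` is even, where `p` is the number of
sign preservations in the sequence of coefficients. -/
theorem descartes_negative_roots (d : ℕ) (P : Polynomial ℝ)
    (hdeg : P.natDegree = d)
    (hnz : ∀ j ≤ d, P.coeff j ≠ 0)
    (p neg : ℕ)
    (hp : p = ((Finset.Icc 1 d).filter
      (fun j => 0 < P.coeff j * P.coeff (j - 1))).card)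
    (hneg : neg = (P.roots.filter (fun x => x < 0)).card) :
    neg ≤ p ∧ Even (p - neg) := by
  have h0 : (P.comp (-X)).coeff 0 ≠ 0 := by simpa [coeff_comp_neg_X] using hnz 0 d.zero_le
  have hneg' : neg = (P.comp (-X)).roots.countP (0 < ·) := by
    rw [hneg, roots_comp_neg_X_countP_pos]
  have hp' : p = (P.comp (-X)).signVariations := by
    rw [hp, signVariations_comp_neg_X (hdeg ▸ hnz), hdeg]
  have hle : neg ≤ p := hneg' ▸ hp' ▸ roots_countP_pos_le_signVariations _
  refine ⟨hle, (Nat.even_sub hle).2 ?_⟩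
  rw [hneg', hp', even_roots_countP_pos_iff h0, even_signVariations_iff h0]
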